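/- arXiv:1805.09623 — 3 statements merged into one kernel-verified Lean document; each statement's English description precedes it below -/
import Mathlib

section
/- Let G be a finite digraph on n vertices. If G contains no directed cycle, then every set D of vertices with the property that for each vertex r ∉ D there exists v ∈ D with an arc (v,r) such that (D ∪ {r}) \ {v} again has this property (i.e., D is an eternal dominating set) must equal the full vertex set; equivalently, the eternal domination number of an acyclic digraph equals n. -/
/-- A family `F` of guard configurations is "eternally closed": every attack on a vertex
outside a member can be defended by moving one guard along an arc, staying in `F`. -/
def EDSFamily {V : Type*} [DecidableEq V] (D : V → V → Prop) (F : Set (Finset V)) : Prop :=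
  ∀ S ∈ F, ∀ r ∉ S, ∃ v ∈ S, D v r ∧ (insert r S).erase v ∈ F

/-- `S` is an eternal dominating set: it belongs to the greatest eternally closed family. -/
def IsEDS {V : Type*} [DecidableEq V] (D : V → V → Prop) (S : Finset V) : Prop :=
  ∃ F, EDSFamily D F ∧ S ∈ F

/-- The eternal domination number of the digraph `D`. -/
noncomputable def eternalDomNum (V : Type*) [Fintype V] [DecidableEq V]
    (D : V → V → Prop) : ℕ :=
  sInf {k | ∃ S : Finset V, IsEDS D S ∧ S.card = k}


/- Defending `r` moves the guard off an in-neighbour `v` of `r`, yet by induction along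
in-neighbours `v` lies in every eternal dominating set. -/
theorem IsEDS.mem_of_acc {V : Type*} [DecidableEq V] {D : V → V → Prop} {S : Finset V}
    (hS : IsEDS D S) {r : V} (hr : Acc D r) : r ∈ S := by
  induction hr generalizing S with
  | intro r _ ih =>
    by_contra hrS
    obtain ⟨F, hF, hSF⟩ := hS
    obtain ⟨v, -, hvr, hmoved⟩ := hF S hSF r hrS
    exact Finset.notMem_erase v _ (ih v hvr ⟨F, hF, hmoved⟩)

theorem IsEDS.eq_univ_of_wellFounded {V : Type*} [Fintype V] [DecidableEq V]
    {D : V → V → Prop} (hwf : WellFounded D) {S : Finset V} (hS : IsEDS D S) :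
    S = Finset.univ :=
  Finset.eq_univ_of_forall fun r => hS.mem_of_acc (hwf.apply r)

theorem isEDS_univ {V : Type*} [Fintype V] [DecidableEq V] (D : V → V → Prop) :
    IsEDS D Finset.univ :=
  ⟨{Finset.univ}, fun S hS r hr => by
    rw [Set.mem_singleton_iff] at hS
    exact absurd (hS ▸ Finset.mem_univ r) hr, rfl⟩

theorem eternalDomNum_eq_card_of_forall_isEDS_eq_univ {V : Type*} [Fintype V] [DecidableEq V]
    {D : V → V → Prop} (h : ∀ S : Finset V, IsEDS D S → S = Finset.univ) :
    eternalDomNum V D = Fintype.card V := by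
  have : {k | ∃ S : Finset V, IsEDS D S ∧ S.card = k} = {Fintype.card V} := by
    ext k
    constructor
    · rintro ⟨S, hS, rfl⟩
      rw [h S hS, Finset.card_univ]
      exact Set.mem_singleton _
    · rintro rfl
      exact ⟨Finset.univ, isEDS_univ D, Finset.card_univ⟩
  rw [eternalDomNum, this, csInf_singleton]

theorem wellFounded_of_forall_not_transGen_self {V : Type*} [Finite V] {D : V → V → Prop}
    (hac : ∀ v, ¬ Relation.TransGen D v v) : WellFounded D :=
  have : IsTrans V (Relation.TransGen D) := ⟨fun _ _ _ => Relation.TransGen.trans⟩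
  have : Std.Irrefl (Relation.TransGen D) := ⟨hac⟩
  Subrelation.wf Relation.TransGen.single (Finite.wellFounded_of_trans_of_irrefl _)

theorem stmt2 {V : Type*} [Fintype V] [DecidableEq V] (D : V → V → Prop)
    (hac : ∀ v, ¬ Relation.TransGen D v v) :
    (∀ S : Finset V, IsEDS D S → S = Finset.univ) ∧
      eternalDomNum V D = Fintype.card V := by
  have hall : ∀ S : Finset V, IsEDS D S → S = Finset.univ := fun _ hS =>
    hS.eq_univ_of_wellFounded (wellFounded_of_forall_not_transGen_self hac)
  exact ⟨hall, eternalDomNum_eq_card_of_forall_isEDS_eq_univ hall⟩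
end

section
/- Let G₁ be a graph admitting a (k, l₁)-NE coloring and G₂ a graph admitting a (k, l₂)-NE coloring. Then the Cartesian product G₁ □ G₂ admits a (k, l₁ + l₂)-NE coloring. -/
/-- A `(k, l)`-NE coloring of `G`: a proper coloring with `k` colors such that every
vertex has exactly `l` neighbors in each color class other than its own. -/
def IsNEColoring {V : Type*} (G : SimpleGraph V) (k l : ℕ) (c : V → ZMod k) : Prop :=
  (∀ u v, G.Adj u v → c u ≠ c v) ∧
  ∀ v : V, ∀ i : ZMod k, i ≠ c v → Nat.card {u : V // G.Adj v u ∧ c u = i} = l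

/-! A neighbor of `(u, v)` in `G₁ □ G₂` either moves `u` along `G₁` or moves `v` along `G₂`.
With the coloring `c₁ u + c₂ v`, the neighbors of color `i` are therefore the `G₁`-neighbors
of `u` of color `i - c₂ v` together with the `G₂`-neighbors of `v` of color `i - c₁ u`, and
`i` differs from the color of `(u, v)` exactly when these two colors differ from `c₁ u` and
`c₂ v` respectively; so there are `l₁ + l₂` of them. -/

namespace SimpleGraph

variable {V₁ V₂ : Type*} {G₁ : SimpleGraph V₁} {G₂ : SimpleGraph V₂}

noncomputable def boxProdAdjSubtypeEquiv (P : V₁ × V₂ → Prop) (u : V₁) (v : V₂) :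
    {x // G₁.Adj u x ∧ P (x, v)} ⊕ {y // G₂.Adj v y ∧ P (u, y)} ≃
      {p // (G₁ □ G₂).Adj (u, v) p ∧ P p} :=
  Equiv.ofBijective
    (Sum.elim (fun x => ⟨(x.1, v), boxProd_adj_left.2 x.2.1, x.2.2⟩)
      (fun y => ⟨(u, y.1), boxProd_adj_right.2 y.2.1, y.2.2⟩))
    ⟨by
      refine Function.Injective.sumElim ?_ ?_ ?_
      · intro x x' h
        exact Subtype.ext (congrArg (·.1.1) h)
      · intro y y' h
        exact Subtype.ext (congrArg (·.1.2) h)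
      · intro x y h
        exact G₁.ne_of_adj x.2.1 (congrArg (·.1.1) h).symm,
    by
      rintro ⟨⟨x, y⟩, hadj, hP⟩
      rcases hadj with ⟨hx, hy : v = y⟩ | ⟨hy, hx : u = x⟩
      · subst hy
        exact ⟨Sum.inl ⟨x, hx, hP⟩, rfl⟩
      · subst hx
        exact ⟨Sum.inr ⟨y, hy, hP⟩, rfl⟩⟩

theorem natCard_boxProd_adj_and [Finite V₁] [Finite V₂] (P : V₁ × V₂ → Prop) (u : V₁)
    (v : V₂) :
    Nat.card {p // (G₁ □ G₂).Adj (u, v) p ∧ P p} =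
      Nat.card {x // G₁.Adj u x ∧ P (x, v)} + Nat.card {y // G₂.Adj v y ∧ P (u, y)} := by
  rw [← Nat.card_sum, Nat.card_congr (boxProdAdjSubtypeEquiv P u v)]

end SimpleGraph

open SimpleGraph

theorem IsNEColoring.boxProd {V₁ V₂ : Type*} [Finite V₁] [Finite V₂] {G₁ : SimpleGraph V₁}
    {G₂ : SimpleGraph V₂} {k l₁ l₂ : ℕ} {c₁ : V₁ → ZMod k} {c₂ : V₂ → ZMod k}
    (h₁ : IsNEColoring G₁ k l₁ c₁) (h₂ : IsNEColoring G₂ k l₂ c₂) :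
    IsNEColoring (G₁ □ G₂) k (l₁ + l₂) (fun p => c₁ p.1 + c₂ p.2) := by
  obtain ⟨proper₁, count₁⟩ := h₁
  obtain ⟨proper₂, count₂⟩ := h₂
  refine ⟨?_, ?_⟩
  · rintro ⟨u₁, u₂⟩ ⟨w₁, w₂⟩ (⟨h, rfl⟩ | ⟨h, rfl⟩)
    · simpa using proper₁ _ _ h
    · simpa using proper₂ _ _ h
  · rintro ⟨u, v⟩ i (hi : i ≠ c₁ u + c₂ v)
    have hi₁ : i - c₂ v ≠ c₁ u := fun h => hi (by rw [← h, sub_add_cancel])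
    have hi₂ : i - c₁ u ≠ c₂ v := fun h => hi (by rw [← h, add_sub_cancel])
    rw [natCard_boxProd_adj_and, ← count₁ u _ hi₁, ← count₂ v _ hi₂]
    simp only [eq_sub_iff_add_eq, add_comm (c₂ _)]

theorem stmt10 {V₁ V₂ : Type*} [Fintype V₁] [Fintype V₂]
    (G₁ : SimpleGraph V₁) (G₂ : SimpleGraph V₂) (k l₁ l₂ : ℕ)
    (h₁ : ∃ c₁ : V₁ → ZMod k, IsNEColoring G₁ k l₁ c₁)
    (h₂ : ∃ c₂ : V₂ → ZMod k, IsNEColoring G₂ k l₂ c₂) :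
    ∃ c : V₁ × V₂ → ZMod k, IsNEColoring (G₁.boxProd G₂) k (l₁ + l₂) c := by
  obtain ⟨c₁, hc₁⟩ := h₁
  obtain ⟨c₂, hc₂⟩ := h₂
  exact ⟨_, hc₁.boxProd hc₂⟩
end

section
/- Coloring the vertex (i,j) of the toroidal king's grid C_n ⊠ C_m (with n, m multiples of 5) by the color i + 2j mod 5 yields a (5, 2)-NE coloring. -/
open Set

section KingGraph

variable {R S T : Type*} [Ring R] [Ring S] [CommRing T]

def unitSteps (R : Type*) [Ring R] : Set R := {0, 1, -1}

def kingSteps (R S : Type*) [Ring R] [Ring S] : Set (R × S) := unitSteps R ×ˢ unitSteps S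

def kingGraph (R S : Type*) [Ring R] [Ring S] : SimpleGraph (R × S) :=
  SimpleGraph.fromRel fun a b => b - a ∈ kingSteps R S

lemma neg_mem_unitSteps {a : R} (h : a ∈ unitSteps R) : -a ∈ unitSteps R := by
  rcases h with rfl | rfl | rfl <;> simp [unitSteps]

lemma neg_mem_kingSteps {d : R × S} (h : d ∈ kingSteps R S) : -d ∈ kingSteps R S :=
  ⟨neg_mem_unitSteps h.1, neg_mem_unitSteps h.2⟩

lemma zero_mem_kingSteps : (0 : R × S) ∈ kingSteps R S := ⟨Or.inl rfl, Or.inl rfl⟩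

lemma kingGraph_adj {u v : R × S} :
    (kingGraph R S).Adj u v ↔ u ≠ v ∧ v - u ∈ kingSteps R S :=
  (SimpleGraph.fromRel_adj _ u v).trans <| and_congr_right fun _ =>
    or_iff_left_of_imp fun h => neg_sub u v ▸ neg_mem_kingSteps h

lemma image_unitSteps (f : R →+* S) : f '' unitSteps R = unitSteps S := by
  simp [unitSteps, image_insert_eq]

lemma image_kingSteps (f : R →+* T) (g : S →+* T) :
    f.prodMap g '' kingSteps R S = kingSteps T T := by
  rw [kingSteps, RingHom.coe_prodMap, prodMap_image_prod, image_unitSteps, image_unitSteps,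
    kingSteps]

lemma injOn_unitSteps (h2 : (2 : S) ≠ 0) (f : R →+* S) : InjOn f (unitSteps R) := by
  have : Nontrivial S := nontrivial_of_ne 2 0 h2
  have h1 : (1 : S) ≠ -1 := fun h =>
    h2 (by rw [← one_add_one_eq_two]; exact eq_neg_iff_add_eq_zero.mp h)
  rintro a (rfl | rfl | rfl) b (rfl | rfl | rfl) h <;> simp_all [eq_comm]

lemma injOn_kingSteps (h2 : (2 : T) ≠ 0) (f : R →+* T) (g : S →+* T) :
    InjOn (f.prodMap g) (kingSteps R S) :=
  (injOn_unitSteps h2 f).prodMap (injOn_unitSteps h2 g)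

def linearColoring (f : R →+* T) (g : S →+* T) (k : T) (p : R × S) : T := f p.1 + k * g p.2

variable (f : R →+* T) (g : S →+* T) (k : T)

lemma linearColoring_eq_prodMap (d : R × S) :
    linearColoring f g k d = (f.prodMap g d).1 + k * (f.prodMap g d).2 := rfl

lemma linearColoring_sub (u v : R × S) :
    linearColoring f g k (u - v) = linearColoring f g k u - linearColoring f g k v := by
  simp only [linearColoring, Prod.fst_sub, Prod.snd_sub, map_sub]; ring

lemma linearColoring_ne_of_adj (h2 : (2 : T) ≠ 0)
    (hk : ∀ e ∈ kingSteps T T, e ≠ 0 → e.1 + k * e.2 ≠ 0) {u v : R × S}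
    (huv : (kingGraph R S).Adj u v) : linearColoring f g k u ≠ linearColoring f g k v := by
  obtain ⟨hne, hd⟩ := kingGraph_adj.mp huv
  have hφd : f.prodMap g (v - u) ≠ 0 := by
    rw [← map_zero (f.prodMap g), (injOn_kingSteps h2 f g).ne_iff hd zero_mem_kingSteps]
    exact sub_ne_zero.mpr hne.symm
  intro h
  refine hk _ (image_kingSteps f g ▸ mem_image_of_mem _ hd) hφd ?_
  rw [← linearColoring_eq_prodMap, linearColoring_sub, h, sub_self]

lemma ncard_neighbors_linearColoring (h2 : (2 : T) ≠ 0) (v : R × S) (i : T) :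
    {u | (kingGraph R S).Adj v u ∧ linearColoring f g k u = i}.ncard =
      {e ∈ kingSteps T T | e ≠ 0 ∧ e.1 + k * e.2 = i - linearColoring f g k v}.ncard := by
  set c := linearColoring f g k
  have hinj := injOn_kingSteps h2 f g
  have htranslate : {u | (kingGraph R S).Adj v u ∧ c u = i} =
      (v + ·) '' {d ∈ kingSteps R S | d ≠ 0 ∧ c d = i - c v} := by
    ext u
    rw [← Equiv.coe_addLeft, Equiv.image_eq_preimage_symm]
    simp only [mem_ofPred_eq, mem_preimage, Equiv.addLeft_symm_apply, kingGraph_adj]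
    rw [neg_add_eq_sub, show c (u - v) = c u - c v from linearColoring_sub f g k u v,
      sub_ne_zero, sub_left_inj, ne_comm]
    tauto
  have hsteps : {d ∈ kingSteps R S | d ≠ 0 ∧ c d = i - c v} =
      kingSteps R S ∩ f.prodMap g ⁻¹' {e | e ≠ 0 ∧ e.1 + k * e.2 = i - c v} := by
    ext d
    simp only [mem_inter_iff, mem_preimage, mem_ofPred_eq]
    refine and_congr_right fun hd => and_congr ?_ Iff.rfl
    rw [← hinj.ne_iff hd zero_mem_kingSteps, map_zero]
  rw [htranslate, ncard_image_of_injective _ (add_right_injective v), hsteps,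
    ← (hinj.mono inter_subset_left).ncard_image, image_inter_preimage, image_kingSteps]
  rfl

end KingGraph

theorem isNEColoring_kingGraph_linearColoring {R S : Type*} [Ring R] [Ring S] {q l : ℕ}
    (h2 : (2 : ZMod q) ≠ 0) (f : R →+* ZMod q) (g : S →+* ZMod q) (k : ZMod q)
    (hproper : ∀ e ∈ kingSteps (ZMod q) (ZMod q), e ≠ 0 → e.1 + k * e.2 ≠ 0)
    (hcount : ∀ t : ZMod q, t ≠ 0 →
      {e ∈ kingSteps (ZMod q) (ZMod q) | e ≠ 0 ∧ e.1 + k * e.2 = t}.ncard = l) :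
    IsNEColoring (kingGraph R S) q l (linearColoring f g k) := by
  refine ⟨fun u v => linearColoring_ne_of_adj f g k h2 hproper, fun v i hi => ?_⟩
  rw [← hcount _ (sub_ne_zero.mpr hi), ← ncard_neighbors_linearColoring f g k h2]
  exact Nat.card_coe_set_eq _

lemma kingSteps_zmod5_ne_zero :
    ∀ e ∈ kingSteps (ZMod 5) (ZMod 5), e ≠ 0 → e.1 + 2 * e.2 ≠ 0 := by
  unfold kingSteps unitSteps; decide

lemma ncard_kingSteps_zmod5 (t : ZMod 5) (ht : t ≠ 0) :
    {e ∈ kingSteps (ZMod 5) (ZMod 5) | e ≠ 0 ∧ e.1 + 2 * e.2 = t}.ncard = 2 := by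
  unfold kingSteps unitSteps
  rw [← Nat.card_coe_set_eq, Nat.card_eq_fintype_card]
  revert t
  decide

-- The graph and the coloring below are `kingGraph` and `linearColoring` unfolded.
theorem stmt14_general (n m : ℕ) (hdn : 5 ∣ n) (hdm : 5 ∣ m) :
    IsNEColoring
      (SimpleGraph.fromRel (fun a b : ZMod n × ZMod m =>
        (b.1 - a.1 = 0 ∨ b.1 - a.1 = 1 ∨ b.1 - a.1 = -1) ∧
        (b.2 - a.2 = 0 ∨ b.2 - a.2 = 1 ∨ b.2 - a.2 = -1)))
      5 2
      (fun p => ZMod.castHom hdn (ZMod 5) p.1 + 2 * ZMod.castHom hdm (ZMod 5) p.2) :=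
  isNEColoring_kingGraph_linearColoring (by decide) (ZMod.castHom hdn (ZMod 5))
    (ZMod.castHom hdm (ZMod 5)) 2 kingSteps_zmod5_ne_zero ncard_kingSteps_zmod5

theorem stmt14 (n m : ℕ) (hn : 3 ≤ n) (hm : 3 ≤ m) (hdn : 5 ∣ n) (hdm : 5 ∣ m) :
    IsNEColoring
      (SimpleGraph.fromRel (fun a b : ZMod n × ZMod m =>
        (b.1 - a.1 = 0 ∨ b.1 - a.1 = 1 ∨ b.1 - a.1 = -1) ∧
        (b.2 - a.2 = 0 ∨ b.2 - a.2 = 1 ∨ b.2 - a.2 = -1)))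
      5 2
      (fun p => ZMod.castHom hdn (ZMod 5) p.1 + 2 * ZMod.castHom hdm (ZMod 5) p.2) :=
  stmt14_general n m hdn hdm
end
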